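/- arXiv:1602.01860 — 2 statements merged into one kernel-verified Lean document; each statement's English description precedes it below -/
import Mathlib

section
/- Suppose the ESP data satisfies Assumption (B) and fix δ > 0 and a set B as in Assumption (B). Then for each x ∈ ∂G ∖ W* and each y ∈ ℝ^J: L_x* y = y if y ∈ d(x)^⊥, while ‖L_x* y‖_{B*} < ‖y‖_{B*} if y ∉ d(x)^⊥. -/
open scoped RealInnerProductSpace ENNReal NNReal
open Filter Topology Set MeasureTheory

noncomputable section

abbrev EucSp (J : ℕ) : Type := EuclideanSpace ℝ (Fin J)

/-- The convex cone generated by a set of vectors (by convention `coneGen ∅ = {0}`). -/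
def coneGen {J : ℕ} (s : Set (EucSp J)) : Set (EucSp J) :=
  { y | ∃ (k : ℕ) (r : Fin k → ℝ) (v : Fin k → EucSp J),
      (∀ i, 0 ≤ r i) ∧ (∀ i, v i ∈ s) ∧ y = ∑ i, r i • v i }

/-- The polyhedral domain `G`. -/
def Gset {J N : ℕ} (n : Fin N → EucSp J) (c : Fin N → ℝ) : Set (EucSp J) :=
  { x | ∀ i, c i ≤ ⟪x, n i⟫ }

/-- The active index set `I(x)`. -/
def ISet {J N : ℕ} (n : Fin N → EucSp J) (c : Fin N → ℝ) (x : EucSp J) : Set (Fin N) :=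
  { i | ⟪x, n i⟫ = c i }

/-- The cone `d(x)` of admissible reflection directions at `x`. -/
def dCone {J N : ℕ} (n : Fin N → EucSp J) (c : Fin N → ℝ) (d : Fin N → EucSp J)
    (x : EucSp J) : Set (EucSp J) :=
  coneGen (d '' ISet n c x)

/-- `(Z, Y)` solves the extended Skorokhod problem for `X`. -/
def SolvesESP {J N : ℕ} (n : Fin N → EucSp J) (c : Fin N → ℝ) (d : Fin N → EucSp J)
    (X Z Y : ℝ → EucSp J) : Prop :=
  ContinuousOn Z (Ici 0) ∧ ContinuousOn Y (Ici 0) ∧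
  Y 0 ∈ dCone n c d (Z 0) ∧
  (∀ t ∈ Ici (0:ℝ), Z t = X t + Y t) ∧
  (∀ t ∈ Ici (0:ℝ), Z t ∈ Gset n c) ∧
  (∀ s t : ℝ, 0 ≤ s → s < t →
    Y t - Y s ∈ coneGen (⋃ u ∈ Ioc s t, dCone n c d (Z u)))

/-- Assumption (B). -/
def AssumptionB {J N : ℕ} (n d : Fin N → EucSp J) : Prop :=
  ∃ δ : ℝ, 0 < δ ∧ ∃ B : Set (EucSp J),
    IsCompact B ∧ Convex ℝ B ∧ (∀ z ∈ B, -z ∈ B) ∧ (0 : EucSp J) ∈ interior B ∧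
    ∀ i : Fin N, ∀ z ∈ frontier B, |⟪z, n i⟫| < δ →
      ∀ ν : EucSp J, ‖ν‖ = 1 → (∀ y ∈ B, 0 ≤ ⟪ν, y - z⟫) → ⟪ν, d i⟫ = 0

/-- Assumption (π). -/
def AssumptionPi {J N : ℕ} (n : Fin N → EucSp J) (c : Fin N → ℝ) (d : Fin N → EucSp J)
    (proj : EucSp J → EucSp J) : Prop :=
  (∀ x, proj x ∈ Gset n c) ∧ (∀ x ∈ Gset n c, proj x = x) ∧
  (∀ x, x ∉ Gset n c → proj x - x ∈ dCone n c d (proj x))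

/-- The supremum norm `‖f‖_T` of `f` over `[0, T]`. -/
def supNorm {J : ℕ} (f : ℝ → EucSp J) (T : ℝ) : ℝ :=
  ⨆ s : Icc (0:ℝ) T, ‖f s.1‖

/-- The subspace (as a set) `H_x`. -/
def Hset {J N : ℕ} (n : Fin N → EucSp J) (c : Fin N → ℝ) (x : EucSp J) : Set (EucSp J) :=
  { y | ∀ i ∈ ISet n c x, ⟪y, n i⟫ = 0 }

/-- The smooth part `S` of the boundary. -/
def Sstar {J N : ℕ} (n : Fin N → EucSp J) (c : Fin N → ℝ) : Set (EucSp J) :=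
  { x ∈ frontier (Gset n c) | (ISet n c x).ncard = 1 }

/-- The nonsmooth part `N` of the boundary. -/
def Nstar {J N : ℕ} (n : Fin N → EucSp J) (c : Fin N → ℝ) : Set (EucSp J) :=
  { x ∈ frontier (Gset n c) | 2 ≤ (ISet n c x).ncard }

/-- The set `W`. -/
def Wstar {J N : ℕ} (n : Fin N → EucSp J) (c : Fin N → ℝ) (d : Fin N → EucSp J) :
    Set (EucSp J) :=
  { x ∈ Nstar n c | Submodule.span ℝ (Hset n c x ∪ dCone n c d x) ≠ ⊤ }

/-- The boundary jitter property on `[0, T)`. -/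
def Jitter {J N : ℕ} (n : Fin N → EucSp J) (c : Fin N → ℝ) (Z Y : ℝ → EucSp J)
    (T : ℝ≥0∞) : Prop :=
  (∀ t : ℝ, 0 ≤ t → ENNReal.ofReal t < T → Z t ∈ Sstar n c →
    ∀ s u : ℝ, s < t → t < u → ENNReal.ofReal u < T →
      ∃ a ∈ Ioo (max s 0) u, ∃ b ∈ Ioo (max s 0) u, Y a ≠ Y b) ∧
  (volume {t : ℝ | 0 ≤ t ∧ ENNReal.ofReal t < T ∧ Z t ∈ Nstar n c} = 0) ∧
  (Z 0 ∈ Nstar n c →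
    ∀ i ∈ ISet n c (Z 0), ∀ δ : ℝ, 0 < δ → ENNReal.ofReal δ < T →
      ∃ u ∈ Ioo (0:ℝ) δ, ISet n c (Z u) = {i}) ∧
  (∀ t : ℝ, 0 < t → ENNReal.ofReal t < T → Z t ∈ Nstar n c →
    ∀ i ∈ ISet n c (Z t), ∀ δ : ℝ, 0 < δ → δ < t →
      ∃ s ∈ Ioo (t - δ) t, ISet n c (Z s) = {i})

/-- `f` is right-continuous with finite left limits on `[0, T)`. -/
def DrOn {J : ℕ} (f : ℝ → EucSp J) (T : ℝ≥0∞) : Prop :=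
  (∀ t : ℝ, 0 ≤ t → ENNReal.ofReal t < T → Tendsto f (𝓝[>] t) (𝓝 (f t))) ∧
  (∀ t : ℝ, 0 < t → ENNReal.ofReal t < T → ∃ L, Tendsto f (𝓝[<] t) (𝓝 L))

/-- `f ∈ D_{ℓ,r}([0,T))`. -/
def DlrOn {J : ℕ} (f : ℝ → EucSp J) (T : ℝ≥0∞) : Prop :=
  (∀ t : ℝ, 0 < t → ENNReal.ofReal t < T → ∃ L, Tendsto f (𝓝[<] t) (𝓝 L)) ∧
  (∀ t : ℝ, 0 ≤ t → ENNReal.ofReal t < T → ∃ L, Tendsto f (𝓝[>] t) (𝓝 L)) ∧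
  (∀ t : ℝ, 0 < t → ENNReal.ofReal t < T →
    Tendsto f (𝓝[<] t) (𝓝 (f t)) ∨ Tendsto f (𝓝[>] t) (𝓝 (f t)))

/-- `(φ, η)` solves the derivative problem associated with `Z` for `ψ` on `[0, T)`. -/
def SolvesDPOn {J N : ℕ} (n : Fin N → EucSp J) (c : Fin N → ℝ) (d : Fin N → EucSp J)
    (Z ψ φ η : ℝ → EucSp J) (T : ℝ≥0∞) : Prop :=
  DrOn φ T ∧ DrOn η T ∧
  η 0 ∈ Submodule.span ℝ (dCone n c d (Z 0)) ∧
  (∀ t : ℝ, 0 ≤ t → ENNReal.ofReal t < T →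
    φ t = ψ t + η t ∧ φ t ∈ Hset n c (Z t)) ∧
  (∀ s t : ℝ, 0 ≤ s → s < t → ENNReal.ofReal t < T →
    η t - η s ∈ Submodule.span ℝ (⋃ u ∈ Ioc s t, dCone n c d (Z u)))

/-- Decomposition `Y = R L` where the components of `L` are nondecreasing and can
increase only when `Z` is on the corresponding face. -/
def LocalTimeProps {J N : ℕ} (n : Fin N → EucSp J) (c : Fin N → ℝ) (d : Fin N → EucSp J)
    (Z Y : ℝ → EucSp J) (L : ℝ → EucSp N) : Prop :=
  ContinuousOn L (Ici 0) ∧ L 0 = 0 ∧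
  (∀ t ∈ Ici (0:ℝ), ∀ i, 0 ≤ L t i) ∧
  (∀ i, MonotoneOn (fun t => L t i) (Ici 0)) ∧
  (∀ t ∈ Ici (0:ℝ), Y t = ∑ i, L t i • d i) ∧
  (∀ i : Fin N, ∀ s t : ℝ, 0 ≤ s → s ≤ t →
    (∀ u ∈ Icc s t, Z u ∉ {x ∈ frontier (Gset n c) | ⟪x, n i⟫ = c i}) →
    L s i = L t i)

/-- The dual set `B*`. -/
def dualSet {J : ℕ} (B : Set (EucSp J)) : Set (EucSp J) :=
  { y | ∀ z ∈ B, ⟪y, z⟫ ≤ 1 }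

/-- `frontComp Ls k y = Ls 0 (Ls 1 (⋯ (Ls (k-1) y)))`. -/
def frontComp {J : ℕ} (Ls : ℕ → (EucSp J → EucSp J)) : ℕ → EucSp J → EucSp J
  | 0, y => y
  | (k+1), y => frontComp Ls k (Ls k y)

/-- `backComp Ls k y = Ls (k-1) (⋯ (Ls 0 y))`. -/
def backComp {J : ℕ} (Ls : ℕ → (EucSp J → EucSp J)) : ℕ → EucSp J → EucSp J
  | 0, y => y
  | (k+1), y => Ls k (backComp Ls k y)

/-!
The support function `h_B(u) = max_{z ∈ B} ⟪u, z⟫` is the gauge of `B*`, so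
`h_B(L_x* y) = max_{z ∈ B} ⟪y, L_x z⟫ ≤ h_B(y)` as soon as `L_x` maps `B` into itself.
Both this invariance and the strictness come from the same observation: if `w ∈ H_x` is a
point of `B` maximizing `⟪u, ·⟫` with `u ≠ 0`, then `w ∈ ∂B` with `|⟪w, n_i⟫| = 0 < δ` for
`i ∈ I(x)`, and `-u / ‖u‖` is a unit inward normal there, so Assumption (B) makes `u`
orthogonal to `d(x)`. Applied to a supporting vector at `L_x z / gauge_B (L_x z)` this gives
`L_x B ⊆ B`; applied to `y` at `L_x z₁` in the equality case it gives `y ∈ d(x)^⊥`.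
-/

section InnerProductSpace

variable {E : Type*} [NormedAddCommGroup E] [InnerProductSpace ℝ E]

lemma eq_zero_of_isMaxOn_inner {B : Set E} {u w : E} (hw : w ∈ interior B)
    (hmax : IsMaxOn (fun z => ⟪u, z⟫) B w) : u = 0 := by
  have hloc : IsLocalMax (innerSL ℝ u) w := hmax.isLocalMax (mem_interior_iff_mem_nhds.mp hw)
  have hzero := hloc.hasFDerivAt_eq_zero (innerSL ℝ u).hasFDerivAt
  simpa using congr($hzero u)

lemma exists_isMaxOn_inner_of_notMem_interior [CompleteSpace E] {B : Set E}
    (hconv : Convex ℝ B) (hB0 : (0 : E) ∈ interior B) {w : E} (hw : w ∉ interior B) :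
    ∃ u : E, 0 < ⟪u, w⟫ ∧ IsMaxOn (fun z => ⟪u, z⟫) B w := by
  obtain ⟨f, hf⟩ := geometric_hahn_banach_open_point hconv.interior isOpen_interior hw
  have hclosure : closure (interior B) = closure B :=
    hconv.closure_interior_eq_closure_of_nonempty_interior ⟨0, hB0⟩
  refine ⟨(InnerProductSpace.toDual ℝ E).symm f, by simpa using hf 0 hB0, fun b hb => ?_⟩
  have hb : b ∈ closure (interior B) := hclosure ▸ subset_closure hb
  simpa using le_on_closure (fun z hz => (hf z hz).le) f.continuous.continuousOn
    continuousOn_const hb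

lemma adjoint_apply_eq_self_of_sub_mem [FiniteDimensional ℝ E] {K : Submodule ℝ E}
    {L : E →ₗ[ℝ] E} (hL : ∀ v, L v - v ∈ K) {y : E} (hy : y ∈ Kᗮ) :
    LinearMap.adjoint L y = y := by
  refine ext_inner_right ℝ fun v => ?_
  rw [LinearMap.adjoint_inner_left, ← sub_eq_zero, ← inner_sub_right]
  exact (K.mem_orthogonal' y).mp hy _ (hL v)

end InnerProductSpace

section Euclidean

variable {J N : ℕ} {n d : Fin N → EucSp J} {c : Fin N → ℝ} {x : EucSp J} {δ : ℝ}
  {B : Set (EucSp J)}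

lemma coneGen_subset_span (s : Set (EucSp J)) : coneGen s ⊆ Submodule.span ℝ s := by
  rintro _ ⟨k, r, v, -, hv, rfl⟩
  exact Submodule.sum_mem _ fun i _ => Submodule.smul_mem _ _ (Submodule.subset_span (hv i))

lemma mem_orthogonal_span_dCone {u : EucSp J} (hu : ∀ i ∈ ISet n c x, ⟪u, d i⟫ = 0) :
    u ∈ (Submodule.span ℝ (dCone n c d x))ᗮ := by
  have hle : Submodule.span ℝ (dCone n c d x) ≤ LinearMap.ker (innerₛₗ ℝ u) := by
    rw [Submodule.span_le]
    refine (coneGen_subset_span _).trans (Submodule.span_le.mpr ?_)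
    rintro _ ⟨i, hi, rfl⟩
    exact hu i hi
  exact (Submodule.mem_orthogonal' _ u).mpr fun v hv => hle hv

open scoped Pointwise in
lemma gauge_dualSet_eq_of_isMaxOn (h0 : (0 : EucSp J) ∈ B)
    {u z : EucSp J} (hz : z ∈ B) (hmax : IsMaxOn (fun b => ⟪u, b⟫) B z) :
    gauge (dualSet B) u = ⟪u, z⟫ := by
  have hmem : ∀ r, 0 < r → (u ∈ r • dualSet B ↔ ⟪u, z⟫ ≤ r) := by
    intro r hr
    rw [Set.mem_smul_set_iff_inv_smul_mem₀ hr.ne']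
    simp only [dualSet, Set.mem_ofPred_eq, real_inner_smul_left, inv_mul_le_iff₀ hr, mul_one]
    exact ⟨fun h => h z hz, fun h b hb => (hmax hb).trans h⟩
  have hM : 0 ≤ ⟪u, z⟫ := by simpa using hmax h0
  refine le_antisymm (le_of_forall_gt_imp_ge_of_dense fun r hr => ?_) ?_
  · exact gauge_le_of_mem (hM.trans hr.le) ((hmem r (hM.trans_lt hr)).mpr hr.le)
  · exact le_csInf ⟨⟪u, z⟫ + 1, by linarith, (hmem _ (by linarith)).mpr (by linarith)⟩
      fun r ⟨hr, hu⟩ => (hmem r hr).mp hu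

lemma mem_orthogonal_of_isMaxOn_inner (hδ : 0 < δ)
    (hBgeom : ∀ i : Fin N, ∀ z ∈ frontier B, |⟪z, n i⟫| < δ →
      ∀ ν : EucSp J, ‖ν‖ = 1 → (∀ y ∈ B, 0 ≤ ⟪ν, y - z⟫) → ⟪ν, d i⟫ = 0)
    {u w : EucSp J} (hu : u ≠ 0) (hwB : w ∈ B) (hwH : w ∈ Hset n c x)
    (hmax : IsMaxOn (fun z => ⟪u, z⟫) B w) :
    u ∈ (Submodule.span ℝ (dCone n c d x))ᗮ := by
  have hwfr : w ∈ frontier B :=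
    ⟨subset_closure hwB, fun hw => hu (eq_zero_of_isMaxOn_inner hw hmax)⟩
  have hnorm : ‖u‖⁻¹ ≠ 0 := inv_ne_zero (norm_ne_zero_iff.mpr hu)
  have hν : ‖-(‖u‖⁻¹ • u)‖ = 1 := by
    rw [norm_neg, norm_smul, norm_inv, norm_norm, inv_mul_cancel₀ (norm_ne_zero_iff.mpr hu)]
  have hinward : ∀ b ∈ B, 0 ≤ ⟪-(‖u‖⁻¹ • u), b - w⟫ := fun b hb => by
    rw [inner_neg_left, real_inner_smul_left, inner_sub_right, neg_nonneg]
    exact mul_nonpos_of_nonneg_of_nonpos (by positivity) (sub_nonpos.mpr (hmax hb))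
  refine mem_orthogonal_span_dCone fun i hi => ?_
  have hνd := hBgeom i w hwfr (by rw [hwH i hi, abs_zero]; exact hδ) _ hν hinward
  rw [inner_neg_left, real_inner_smul_left, neg_eq_zero] at hνd
  exact (mul_eq_zero.mp hνd).resolve_left hnorm

lemma mem_of_mem_Hset_of_sub_mem_span (hδ : 0 < δ)
    (hBgeom : ∀ i : Fin N, ∀ z ∈ frontier B, |⟪z, n i⟫| < δ →
      ∀ ν : EucSp J, ‖ν‖ = 1 → (∀ y ∈ B, 0 ≤ ⟪ν, y - z⟫) → ⟪ν, d i⟫ = 0)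
    (hBclosed : IsClosed B) (hBconvex : Convex ℝ B) (hB0 : (0 : EucSp J) ∈ interior B)
    {z p : EucSp J} (hz : z ∈ B) (hpH : p ∈ Hset n c x)
    (hpz : p - z ∈ Submodule.span ℝ (dCone n c d x)) : p ∈ B := by
  have hBnhds : B ∈ 𝓝 (0 : EucSp J) := mem_interior_iff_mem_nhds.mp hB0
  by_contra hp
  set g := gauge B p
  have hg : 1 < g := by
    rw [← not_le, gauge_le_one_iff_mem_closure hBconvex hBnhds, hBclosed.closure_eq]
    exact hp
  have hg0 : 0 < g := one_pos.trans hg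
  set w := g⁻¹ • p
  have hwfr : w ∈ frontier B := by
    rw [← gauge_eq_one_iff_mem_frontier hBconvex hBnhds,
      gauge_smul_of_nonneg (inv_nonneg.mpr hg0.le), smul_eq_mul, inv_mul_cancel₀ hg0.ne']
  have hwH : w ∈ Hset n c x := fun i hi => by rw [real_inner_smul_left, hpH i hi, mul_zero]
  obtain ⟨u, hupos, hmax⟩ := exists_isMaxOn_inner_of_notMem_interior hBconvex hB0 hwfr.2
  have hu : u ∈ (Submodule.span ℝ (dCone n c d x))ᗮ :=
    mem_orthogonal_of_isMaxOn_inner hδ hBgeom (by rintro rfl; simp at hupos)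
      (hBclosed.frontier_subset hwfr) hwH hmax
  have hpz' : ⟪u, p⟫ = ⟪u, z⟫ := by
    rw [← sub_eq_zero, ← inner_sub_right]
    exact (Submodule.mem_orthogonal' _ u).mp hu _ hpz
  have hpw : ⟪u, p⟫ = g * ⟪u, w⟫ := by
    rw [real_inner_smul_right, mul_inv_cancel_left₀ hg0.ne']
  have hzw : ⟪u, z⟫ ≤ ⟪u, w⟫ := hmax hz
  nlinarith

lemma gauge_dualSet_adjoint_lt (hδ : 0 < δ)
    (hBgeom : ∀ i : Fin N, ∀ z ∈ frontier B, |⟪z, n i⟫| < δ →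
      ∀ ν : EucSp J, ‖ν‖ = 1 → (∀ y ∈ B, 0 ≤ ⟪ν, y - z⟫) → ⟪ν, d i⟫ = 0)
    (hBcompact : IsCompact B) (hBconvex : Convex ℝ B) (hB0 : (0 : EucSp J) ∈ interior B)
    {L : EucSp J →ₗ[ℝ] EucSp J}
    (hL : ∀ y : EucSp J, L y ∈ Hset n c x ∧ L y - y ∈ Submodule.span ℝ (dCone n c d x))
    {y : EucSp J} (hy : y ∉ (Submodule.span ℝ (dCone n c d x))ᗮ) :
    gauge (dualSet B) (LinearMap.adjoint L y) < gauge (dualSet B) y := by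
  have h0 : (0 : EucSp J) ∈ B := interior_subset hB0
  have hLB : ∀ z ∈ B, L z ∈ B := fun z hz =>
    mem_of_mem_Hset_of_sub_mem_span hδ hBgeom hBcompact.isClosed hBconvex hB0 hz (hL z).1
      (hL z).2
  obtain ⟨z₁, hz₁, hmax₁⟩ := hBcompact.exists_isMaxOn ⟨0, h0⟩
    (f := fun z => ⟪LinearMap.adjoint L y, z⟫) (continuous_const.inner continuous_id).continuousOn
  obtain ⟨z₂, hz₂, hmax₂⟩ := hBcompact.exists_isMaxOn ⟨0, h0⟩
    (f := fun z => ⟪y, z⟫) (continuous_const.inner continuous_id).continuousOn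
  rw [gauge_dualSet_eq_of_isMaxOn h0 hz₁ hmax₁, gauge_dualSet_eq_of_isMaxOn h0 hz₂ hmax₂,
    LinearMap.adjoint_inner_left]
  refine (hmax₂ (hLB z₁ hz₁)).lt_of_ne fun heq => hy ?_
  have hmax : IsMaxOn (fun z => ⟪y, z⟫) B (L z₁) := fun b hb => by
    simpa only [Set.mem_ofPred_eq, heq] using hmax₂ hb
  exact mem_orthogonal_of_isMaxOn_inner hδ hBgeom (by rintro rfl; simp at hy) (hLB z₁ hz₁)
    (hL z₁).1 hmax

end Euclidean

theorem statement15_general (J N : ℕ)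
    (n d : Fin N → EucSp J) (c : Fin N → ℝ)
    (δ : ℝ) (hδ : 0 < δ) (B : Set (EucSp J))
    (hBcompact : IsCompact B) (hBconvex : Convex ℝ B)
    (hB0 : (0 : EucSp J) ∈ interior B)
    (hBgeom : ∀ i : Fin N, ∀ z ∈ frontier B, |⟪z, n i⟫| < δ →
      ∀ ν : EucSp J, ‖ν‖ = 1 → (∀ y ∈ B, 0 ≤ ⟪ν, y - z⟫) → ⟪ν, d i⟫ = 0) :
    ∀ x ∈ frontier (Gset n c), x ∉ Wstar n c d →
      ∀ L : EucSp J →ₗ[ℝ] EucSp J,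
        (∀ y : EucSp J, L y ∈ Hset n c x ∧ L y - y ∈ Submodule.span ℝ (dCone n c d x)) →
        ∀ y : EucSp J,
          (y ∈ (Submodule.span ℝ (dCone n c d x))ᗮ → LinearMap.adjoint L y = y) ∧
          (y ∉ (Submodule.span ℝ (dCone n c d x))ᗮ →
            gauge (dualSet B) (LinearMap.adjoint L y) < gauge (dualSet B) y) := by
  intro x _ _ L hL y
  exact ⟨adjoint_apply_eq_self_of_sub_mem fun v => (hL v).2,
    gauge_dualSet_adjoint_lt hδ hBgeom hBcompact hBconvex hB0 hL⟩

/-- **Lemma (strict contraction property of the adjoint projection operators).**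
Fix `δ > 0` and a set `B` as in Assumption (B).  For each `x ∈ ∂G \ W*`, the adjoint `L_x*`
of the derivative projection operator fixes every `y ∈ d(x)^⊥`, and strictly decreases the
`B*`-gauge of every `y ∉ d(x)^⊥`. -/
theorem statement15 (J N : ℕ) (hJ : 1 ≤ J) (hN : 1 ≤ N)
    (n d : Fin N → EucSp J) (c : Fin N → ℝ)
    (hn : ∀ i, ‖n i‖ = 1) (hdn : ∀ i, ⟪d i, n i⟫ = 1)
    (hGne : (Gset n c).Nonempty)
    (δ : ℝ) (hδ : 0 < δ) (B : Set (EucSp J))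
    (hBcompact : IsCompact B) (hBconvex : Convex ℝ B) (hBsymm : ∀ z ∈ B, -z ∈ B)
    (hB0 : (0 : EucSp J) ∈ interior B)
    (hBgeom : ∀ i : Fin N, ∀ z ∈ frontier B, |⟪z, n i⟫| < δ →
      ∀ ν : EucSp J, ‖ν‖ = 1 → (∀ y ∈ B, 0 ≤ ⟪ν, y - z⟫) → ⟪ν, d i⟫ = 0) :
    ∀ x ∈ frontier (Gset n c), x ∉ Wstar n c d →
      ∀ L : EucSp J →ₗ[ℝ] EucSp J,
        (∀ y : EucSp J, L y ∈ Hset n c x ∧ L y - y ∈ Submodule.span ℝ (dCone n c d x)) →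
        ∀ y : EucSp J,
          (y ∈ (Submodule.span ℝ (dCone n c d x))ᗮ → LinearMap.adjoint L y = y) ∧
          (y ∉ (Submodule.span ℝ (dCone n c d x))ᗮ →
            gauge (dualSet B) (LinearMap.adjoint L y) < gauge (dualSet B) y) :=
  statement15_general J N n d c δ hδ B hBcompact hBconvex hB0 hBgeom
end
end

section
/- Suppose the ESP data satisfies Assumption (B) and fix δ > 0 and a set B as in Assumption (B). Then there exists δ' ∈ [0,1) such that for every x ∈ ∂G ∖ W*, every K ∈ ℕ, and every finite sequence x₁,…,x_K ∈ ∂G ∖ W* with I(x) = ⋃_{k=1}^K I(x_k), one has ‖L_{x₁}* ⋯ L_{x_K}* y‖_{B*} ≤ δ'‖y‖_{B*} for all y ∈ H_x^⊥. Consequently, if x ∈ ∂G ∖ W* and (x_k)_{k∈ℕ} is a sequence in ∂G ∖ W* with I(x) = ⋃_{k≥ℓ} I(x_k) for every ℓ ∈ ℕ, then for every y ∈ H_x^⊥, L_{x₁}* ⋯ L_{x_K}* y → 0 as K → ∞. -/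
open scoped RealInnerProductSpace ENNReal NNReal
open Filter Topology Set MeasureTheory

noncomputable section

open Pointwise

/-!
Write `C_A = B + H_A` for `H_A = {y | ⟪y, n i⟫ = 0 for i ∈ A}` and `D_A = span {d i | i ∈ A}`.
Assumption (B) says that a linear functional maximised over `B` at a point of the `δ`-band of
face `i` kills `d i`; it passes to `C_A` for `i ∈ A`. Hence `H_A ∩ D_A = 0`, and every `L_x` with
`I(x) ⊆ A` fixes `H_A` and maps `C_A` into itself: were a point of `B` pushed out, a supporting
functional at the rescaled boundary point would kill the move `L_x b - b ∈ D_{I(x)}`.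

If chains of such maps covering `A` could carry `C_A` arbitrarily close to its boundary,
compactness of `B` would give a supporting functional `f` of `C_A` at a limit point; `f` vanishes
on `H_A`, and walking a chain ending near the top of `f` backwards shows that `f` kills every
`d i`, `i ∈ A`. As `H_A + D_A` is the whole space (`x ∉ W*`), `f = 0`, a contradiction. So
covering chains map `C_A` into `β • C_A` with `β < 1`, uniformly in the chain. For `y ⊥ H_A` the
gauge of `B*` is the support function of `C_A`, so the adjoint products contract it by `β`;
iterating over consecutive covering blocks of an infinite sequence gives the convergence.
-/

section FaceSpace

variable {E ι : Type*} [NormedAddCommGroup E] [InnerProductSpace ℝ E] {n d : ι → E} {A : Set ι}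

def faceSpace (n : ι → E) (A : Set ι) : Submodule ℝ E where
  carrier := {y | ∀ i ∈ A, ⟪y, n i⟫ = 0}
  add_mem' hx hy i hi := by rw [inner_add_left, hx i hi, hy i hi, add_zero]
  zero_mem' _ _ := inner_zero_left _
  smul_mem' r _ hx i hi := by rw [real_inner_smul_left, hx i hi, mul_zero]

@[simp]
lemma mem_faceSpace {y : E} : y ∈ faceSpace n A ↔ ∀ i ∈ A, ⟪y, n i⟫ = 0 := Iff.rfl

lemma faceSpace_antitone : Antitone (faceSpace (ι := ι) n) :=
  fun _ _ h _ hy i hi => hy i (h hi)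

lemma isClosed_faceSpace : IsClosed (faceSpace n A : Set E) := by
  have : (faceSpace n A : Set E) = ⋂ i ∈ A, {y | ⟪y, n i⟫ = 0} := by ext; simp
  rw [this]
  exact isClosed_biInter fun i _ =>
    isClosed_eq (continuous_id.inner continuous_const) continuous_const

lemma faceSpace_empty : faceSpace n (∅ : Set ι) = ⊤ :=
  eq_top_iff.2 fun _ _ i hi => absurd hi (notMem_empty i)

lemma faceSpace_singleton_sup_span {i : ι} (h : ⟪d i, n i⟫ ≠ 0) :
    faceSpace n {i} ⊔ Submodule.span ℝ (d '' {i}) = ⊤ := by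
  refine eq_top_iff.2 fun v _ => Submodule.mem_sup.2 ?_
  set t := ⟪v, n i⟫ / ⟪d i, n i⟫
  refine ⟨v - t • d i, ?_, t • d i,
    Submodule.smul_mem _ _ (Submodule.subset_span ⟨i, rfl, rfl⟩), sub_add_cancel _ _⟩
  rintro j rfl
  rw [inner_sub_left, real_inner_smul_left, div_mul_cancel₀ _ h, sub_self]

lemma map_eq_zero_of_mem_span_image (f : StrongDual ℝ E) (h : ∀ i ∈ A, f (d i) = 0) {w : E}
    (hw : w ∈ Submodule.span ℝ (d '' A)) : f w = 0 := by
  have : Submodule.span ℝ (d '' A) ≤ LinearMap.ker (f : E →ₗ[ℝ] ℝ) :=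
    Submodule.span_le.2 <| by rintro _ ⟨i, hi, rfl⟩; exact h i hi
  exact this hw

def IsObliqueProjection (n d : ι → E) (A : Set ι) (L : E →ₗ[ℝ] E) : Prop :=
  ∀ y, L y ∈ faceSpace n A ∧ L y - y ∈ Submodule.span ℝ (d '' A)

lemma IsObliqueProjection.apply_eq_self {L : E →ₗ[ℝ] E} (hL : IsObliqueProjection n d A L)
    (hdisj : Disjoint (faceSpace n A) (Submodule.span ℝ (d '' A))) {h : E}
    (hh : h ∈ faceSpace n A) : L h = h :=
  sub_eq_zero.1 <| Submodule.disjoint_def.1 hdisj _ (sub_mem (hL h).1 hh) (hL h).2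

end FaceSpace

section Cylinder

variable {E ι : Type*} [NormedAddCommGroup E] [InnerProductSpace ℝ E] {n d : ι → E} {A : Set ι}
  {B : Set E}

def faceCylinder (B : Set E) (n : ι → E) (A : Set ι) : Set E := B + (faceSpace n A : Set E)

lemma subset_faceCylinder : B ⊆ faceCylinder B n A :=
  fun b hb => ⟨b, hb, 0, zero_mem _, add_zero b⟩

lemma add_mem_faceCylinder {v h : E} (hv : v ∈ faceCylinder B n A) (hh : h ∈ faceSpace n A) :
    v + h ∈ faceCylinder B n A := by
  obtain ⟨b, hb, h', hh', rfl⟩ := hv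
  exact ⟨b, hb, h' + h, add_mem hh' hh, (add_assoc _ _ _).symm⟩

lemma add_mem_smul_faceCylinder {t : ℝ} (ht : t ≠ 0) {v h : E}
    (hv : v ∈ t • faceCylinder B n A) (hh : h ∈ faceSpace n A) :
    v + h ∈ t • faceCylinder B n A := by
  rw [mem_smul_set_iff_inv_smul_mem₀ ht] at hv ⊢
  rw [smul_add]
  exact add_mem_faceCylinder hv (Submodule.smul_mem _ _ hh)

lemma convex_faceCylinder (hB : Convex ℝ B) : Convex ℝ (faceCylinder B n A) :=
  hB.add (faceSpace n A).convex

lemma isClosed_faceCylinder (hB : IsCompact B) : IsClosed (faceCylinder B n A) :=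
  isClosed_faceSpace.add_left_of_isCompact hB

lemma faceCylinder_mem_nhds (hB : B ∈ 𝓝 0) : faceCylinder B n A ∈ 𝓝 0 :=
  mem_of_superset hB subset_faceCylinder

lemma map_eq_zero_of_bddAbove_faceCylinder (hB : (0 : E) ∈ B) {f : StrongDual ℝ E} {σ : ℝ}
    (hf : ∀ y ∈ faceCylinder B n A, f y ≤ σ) {h : E} (hh : h ∈ faceSpace n A) : f h = 0 := by
  have key : ∀ t : ℝ, t * f h ≤ σ := fun t => by
    simpa using hf (t • h) ⟨0, hB, t • h, Submodule.smul_mem _ t hh, zero_add _⟩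
  by_contra hne
  have := key ((σ + 1) / f h)
  rw [div_mul_cancel₀ _ hne] at this
  linarith

end Cylinder

section Compactness

variable {F : Type*} [NormedAddCommGroup F] [NormedSpace ℝ F]

lemma exists_isMaxOn_pos_of_notMem_interior {C : Set F} {p : F} (hC : Convex ℝ C)
    (h0 : (0 : F) ∈ interior C) (hp : p ∉ interior C) :
    ∃ f : StrongDual ℝ F, IsMaxOn f C p ∧ 0 < f p := by
  obtain ⟨f, hf0, hmax⟩ := geometric_hahn_banach_of_nonempty_interior_point hC hp ⟨0, h0⟩
  refine ⟨f, isMaxOn_iff.2 hmax, lt_of_not_ge fun hp0 => hf0 ?_⟩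
  have : IsMaxOn f C 0 := isMaxOn_iff.2 fun y hy => by simpa using (hmax y hy).trans hp0
  exact (this.isLocalMax (mem_interior_iff_mem_nhds.1 h0)).hasFDerivAt_eq_zero f.hasFDerivAt

lemma IsCompact.exists_subset_smul_of_subset_interior {K C : Set F} (hK : IsCompact K)
    (hC : Convex ℝ C) (hCcl : IsClosed C) (hC0 : C ∈ 𝓝 0) (hKC : K ⊆ interior C) :
    ∃ β : ℝ, 0 < β ∧ β < 1 ∧ K ⊆ β • C := by
  obtain ⟨γ, hγ1, hKγ⟩ : ∃ γ < 1, ∀ x ∈ K, gauge C x ≤ γ := by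
    rcases K.eq_empty_or_nonempty with rfl | hne
    · exact ⟨0, one_pos, by simp⟩
    obtain ⟨x₀, hx₀, hmax⟩ := hK.exists_isMaxOn hne (continuous_gauge hC hC0).continuousOn
    exact ⟨_, (gauge_lt_one_iff_mem_interior hC hC0).2 (hKC hx₀), fun x hx => hmax hx⟩
  have hβ : 0 < max γ (1 / 2 : ℝ) := lt_max_of_lt_right (by norm_num)
  refine ⟨max γ (1 / 2 : ℝ), hβ, max_lt hγ1 (by norm_num), fun x hx => ?_⟩
  rw [mem_smul_set_iff_inv_smul_mem₀ hβ.ne', ← hCcl.closure_eq,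
    ← gauge_le_one_iff_mem_closure hC hC0, gauge_smul_of_nonneg (inv_nonneg.2 hβ.le),
    smul_eq_mul, inv_mul_le_one₀ hβ]
  exact (hKγ x hx).trans (le_max_left _ _)

lemma IsCompact.exists_pos_forall_exists_dist_lt {X : Type*} [MetricSpace X] {K : Set X}
    (hK : IsCompact K) {f : X → ℝ} (hf : Continuous f) (σ : ℝ) {δ : ℝ} (hδ : 0 < δ) :
    ∃ ε > 0, ∀ x ∈ K, σ - ε ≤ f x → ∃ y ∈ K, σ ≤ f y ∧ dist x y < δ := by
  set V : ℕ → Set X := fun j => K ∩ {x | σ - 1 / (j + 1) ≤ f x}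
  have hV : Antitone V := fun i j hij x ⟨hx, hfx⟩ =>
    ⟨hx, (by gcongr : σ - 1 / ((i : ℝ) + 1) ≤ σ - 1 / ((j : ℝ) + 1)).trans hfx⟩
  have hnhds : ∀ x ∈ ⋂ j, V j, Metric.thickening δ (K ∩ {x | σ ≤ f x}) ∈ 𝓝 x := by
    refine fun x hx => Metric.isOpen_thickening.mem_nhds
      (Metric.self_subset_thickening hδ _ ⟨(mem_iInter.1 hx 0).1, ?_⟩)
    have hlim : Tendsto (fun j : ℕ => σ - 1 / ((j : ℝ) + 1)) atTop (𝓝 σ) := by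
      simpa using tendsto_one_div_add_atTop_nhds_zero_nat.const_sub σ
    exact le_of_tendsto' hlim fun j => (mem_iInter.1 hx j).2
  obtain ⟨j, hj⟩ := exists_subset_nhds_of_isCompact hV.directed_ge
    (fun j => hK.inter_right (isClosed_le continuous_const hf)) hnhds
  refine ⟨1 / (j + 1), by positivity, fun x hx hfx => ?_⟩
  obtain ⟨y, ⟨hyK, hfy⟩, hxy⟩ := Metric.mem_thickening_iff.1 (hj ⟨hx, hfx⟩)
  exact ⟨y, hyK, hfy, hxy⟩

end Compactness

section AssumptionB

variable {E ι : Type*} [NormedAddCommGroup E] [InnerProductSpace ℝ E] {n d : ι → E}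
  {B : Set E} {δ : ℝ}

/-- Assumption (B) for a fixed pair `(δ, B)`, with the unit inward normals of `B` at `z` replaced
by the continuous linear functionals that attain their maximum over `B` at `z`. -/
structure SatisfiesAssumptionB (B : Set E) (δ : ℝ) (n d : ι → E) : Prop where
  isCompact : IsCompact B
  convex : Convex ℝ B
  zero_mem_interior : (0 : E) ∈ interior B
  pos : 0 < δ
  map_eq_zero_of_isMaxOn : ∀ i, ∀ z ∈ B, |⟪z, n i⟫| < δ →
    ∀ f : StrongDual ℝ E, IsMaxOn f B z → f (d i) = 0

lemma SatisfiesAssumptionB.of_unit_normals [CompleteSpace E] (hc : IsCompact B)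
    (hconv : Convex ℝ B) (h0 : (0 : E) ∈ interior B) (hδ : 0 < δ)
    (hgeom : ∀ i, ∀ z ∈ frontier B, |⟪z, n i⟫| < δ →
      ∀ ν : E, ‖ν‖ = 1 → (∀ y ∈ B, 0 ≤ ⟪ν, y - z⟫) → ⟪ν, d i⟫ = 0) :
    SatisfiesAssumptionB B δ n d where
  isCompact := hc
  convex := hconv
  zero_mem_interior := h0
  pos := hδ
  map_eq_zero_of_isMaxOn i z hz hzn f hf := by
    rcases eq_or_ne f 0 with rfl | hf0
    · rfl
    have hfr : z ∈ frontier B := ⟨subset_closure hz, fun hint => hf0 <|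
      (hf.isLocalMax (mem_interior_iff_mem_nhds.1 hint)).hasFDerivAt_eq_zero f.hasFDerivAt⟩
    set μ := (InnerProductSpace.toDual ℝ E).symm f
    have hμ : ∀ x, ⟪μ, x⟫ = f x := fun x => InnerProductSpace.toDual_symm_apply
    have hμ0 : 0 < ‖μ‖ := norm_pos_iff.2 fun h => hf0 <| by
      ext x; rw [← hμ, h, inner_zero_left]; rfl
    have := hgeom i z hfr hzn (-‖μ‖⁻¹ • μ)
      (by rw [norm_smul, norm_neg, norm_inv, norm_norm, inv_mul_cancel₀ hμ0.ne'])
      fun y hy => by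
        rw [real_inner_smul_left, inner_sub_right, hμ, hμ, neg_mul, neg_nonneg]
        exact mul_nonpos_of_nonneg_of_nonpos (inv_nonneg.2 hμ0.le)
          (sub_nonpos.2 (isMaxOn_iff.1 hf y hy))
    rw [real_inner_smul_left, hμ] at this
    exact (mul_eq_zero.1 this).resolve_left (neg_ne_zero.2 (inv_ne_zero hμ0.ne'))

end AssumptionB

namespace SatisfiesAssumptionB

variable {E ι : Type*} [NormedAddCommGroup E] [InnerProductSpace ℝ E] {n d : ι → E}
  {A A' : Set ι} {B : Set E} {δ : ℝ} (hB : SatisfiesAssumptionB B δ n d)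
include hB

theorem disjoint_faceSpace_span (hn : ∀ i, ‖n i‖ ≤ 1) (A : Set ι) :
    Disjoint (faceSpace n A) (Submodule.span ℝ (d '' A)) := by
  refine Submodule.disjoint_def.2 fun v hvH hvD => by_contra fun hv => ?_
  have hB0 : (0 : E) ∈ B := interior_subset hB.zero_mem_interior
  have hcont : Continuous fun y : E => ⟪v, y⟫ := continuous_const.inner continuous_id
  obtain ⟨z, ⟨hzB, hzH⟩, hzmax⟩ :=
    (hB.isCompact.inter_right (isClosed_faceSpace (n := n) (A := A))).exists_isMaxOn
      ⟨0, hB0, zero_mem _⟩ hcont.continuousOn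
  have hv0 : 0 < ‖v‖ := norm_pos_iff.2 hv
  set ε := δ / (2 * ‖v‖)
  have hε0 : 0 ≤ ε := div_nonneg hB.pos.le (by positivity)
  have hε : ε * ‖v‖ = δ / 2 := by simp only [ε]; field_simp
  set u := z + ε • v
  have huH : u ∈ faceSpace n A := add_mem hzH (Submodule.smul_mem _ _ hvH)
  have huB : u ∉ B := fun huB => by
    have : ⟪v, u⟫ ≤ ⟪v, z⟫ := hzmax ⟨huB, huH⟩
    rw [inner_add_right, real_inner_smul_right, real_inner_self_eq_norm_sq] at this
    nlinarith [hB.pos]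
  -- the nearest point `q` of `B` to `u` carries the outer normal `u - q`
  obtain ⟨q, hqB, hq⟩ := exists_norm_eq_iInf_of_complete_convex ⟨0, hB0⟩
    hB.isCompact.isComplete hB.convex u
  have hnormal := (norm_eq_iInf_iff_real_inner_le_zero hB.convex hqB).1 hq
  have hdist : ‖u - q‖ < δ := calc
    ‖u - q‖ ≤ ‖u - z‖ := hq ▸ ciInf_le (f := fun w : B => ‖u - w‖)
      ⟨0, forall_mem_range.2 fun _ => norm_nonneg _⟩ ⟨z, hzB⟩
    _ = δ / 2 := by rw [add_sub_cancel_left, norm_smul, Real.norm_of_nonneg hε0, hε]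
    _ < δ := half_lt_self hB.pos
  have hd : ∀ i ∈ A, innerSL ℝ (u - q) (d i) = 0 := by
    refine fun i hi => hB.map_eq_zero_of_isMaxOn i q hqB ?_ _ (isMaxOn_iff.2 fun y hy => ?_)
    · calc |⟪q, n i⟫| = |⟪u - q, n i⟫| := by
            rw [inner_sub_left, huH i hi, zero_sub, abs_neg]
        _ ≤ ‖u - q‖ * ‖n i‖ := abs_real_inner_le_norm _ _
        _ ≤ ‖u - q‖ := mul_le_of_le_one_right (norm_nonneg _) (hn i)
        _ < δ := hdist
    · have := hnormal y hy
      rw [inner_sub_right] at this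
      rw [innerSL_apply_apply, innerSL_apply_apply]
      linarith
  have hv' : ⟪u - q, v⟫ = 0 := by
    have := map_eq_zero_of_mem_span_image _ hd hvD
    rwa [innerSL_apply_apply] at this
  have hzq := hnormal z hzB
  have huq : 0 < ‖u - q‖ := norm_pos_iff.2 (sub_ne_zero.2 fun h => huB (h ▸ hqB))
  rw [show z - q = (u - q) - ε • v by simp only [u]; abel, inner_sub_right,
    real_inner_smul_right, hv', real_inner_self_eq_norm_sq] at hzq
  nlinarith

theorem exists_pos_map_eq_zero_of_near_max (hn : ∀ i, ‖n i‖ ≤ 1) (f : StrongDual ℝ E) {σ : ℝ}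
    (hf : ∀ y ∈ B, f y ≤ σ) :
    ∃ ε > 0, ∀ b ∈ B, σ - ε ≤ f b → ∀ i, ⟪b, n i⟫ = 0 → f (d i) = 0 := by
  obtain ⟨ε, hε, hslab⟩ := hB.isCompact.exists_pos_forall_exists_dist_lt f.continuous σ hB.pos
  refine ⟨ε, hε, fun b hb hfb i hbi => ?_⟩
  obtain ⟨b', hb', hfb', hbb'⟩ := hslab b hb hfb
  refine hB.map_eq_zero_of_isMaxOn i b' hb' ?_ f (isMaxOn_iff.2 fun y hy => (hf y hy).trans hfb')
  calc |⟪b', n i⟫| = |⟪b' - b, n i⟫| := by rw [inner_sub_left, hbi, sub_zero]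
    _ ≤ ‖b' - b‖ * ‖n i‖ := abs_real_inner_le_norm _ _
    _ ≤ ‖b' - b‖ := mul_le_of_le_one_right (norm_nonneg _) (hn i)
    _ < δ := by rwa [← dist_eq_norm, dist_comm]

theorem exists_pos_map_eq_zero_of_near_max_faceCylinder (hn : ∀ i, ‖n i‖ ≤ 1)
    (f : StrongDual ℝ E) {σ : ℝ} (hf : ∀ y ∈ faceCylinder B n A, f y ≤ σ) :
    ∃ ε > 0, ∀ p ∈ faceCylinder B n A, σ - ε ≤ f p → ∀ i ∈ A, ⟪p, n i⟫ = 0 → f (d i) = 0 := by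
  obtain ⟨ε, hε, h⟩ :=
    hB.exists_pos_map_eq_zero_of_near_max hn f fun y hy => hf y (subset_faceCylinder hy)
  refine ⟨ε, hε, ?_⟩
  rintro _ ⟨b, hb, h', hh', rfl⟩ hfp i hi hpi
  have hfh : f h' = 0 :=
    map_eq_zero_of_bddAbove_faceCylinder (interior_subset hB.zero_mem_interior) hf hh'
  refine h b hb (by simpa [hfh] using hfp) i ?_
  simpa [inner_add_left, hh' i hi] using hpi

theorem mapsTo_faceCylinder [FiniteDimensional ℝ E] (hn : ∀ i, ‖n i‖ ≤ 1) (hA : A' ⊆ A)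
    {L : E →ₗ[ℝ] E} (hL : IsObliqueProjection n d A' L) :
    MapsTo L (faceCylinder B n A) (faceCylinder B n A) := by
  set C := faceCylinder B n A
  have hC0 : C ∈ 𝓝 0 := faceCylinder_mem_nhds (mem_interior_iff_mem_nhds.1 hB.zero_mem_interior)
  have hCconv : Convex ℝ C := convex_faceCylinder hB.convex
  have hCcl : IsClosed C := isClosed_faceCylinder hB.isCompact
  suffices hBC : ∀ b ∈ B, gauge C (L b) ≤ 1 by
    rintro _ ⟨b, hb, h, hh, rfl⟩
    rw [map_add, hL.apply_eq_self (hB.disjoint_faceSpace_span hn A') (faceSpace_antitone hA hh)]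
    refine add_mem_faceCylinder (show L b ∈ C from ?_) hh
    rw [← hCcl.closure_eq]
    exact (gauge_le_one_iff_mem_closure hCconv hC0).1 (hBC b hb)
  obtain ⟨b₀, hb₀, hmax⟩ := hB.isCompact.exists_isMaxOn ⟨0, interior_subset hB.zero_mem_interior⟩
    ((continuous_gauge hCconv hC0).comp L.continuous_of_finiteDimensional).continuousOn
  refine fun b hb => (hmax hb).trans (le_of_not_gt fun hβ => ?_)
  set β := gauge C (L b₀)
  replace hβ : 1 < β := hβ
  set p := β⁻¹ • L b₀
  have hp : gauge C p = 1 := by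
    rw [gauge_smul_of_nonneg (inv_nonneg.2 (by linarith)), smul_eq_mul,
      inv_mul_cancel₀ (by linarith)]
  have hpfr := (gauge_eq_one_iff_mem_frontier hCconv hC0).1 hp
  obtain ⟨f, hfmax, hfp⟩ :=
    exists_isMaxOn_pos_of_notMem_interior hCconv (mem_interior_iff_mem_nhds.2 hC0) hpfr.2
  obtain ⟨ε, hε, hslab⟩ :=
    hB.exists_pos_map_eq_zero_of_near_max_faceCylinder hn f (σ := f p) fun y hy => hfmax hy
  have hd : ∀ i ∈ A', f (d i) = 0 := fun i hi =>
    hslab p (hCcl.frontier_subset hpfr) (by linarith) i (hA hi)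
      (by rw [real_inner_smul_left, (hL b₀).1 i hi, mul_zero])
  have h1 : f (L b₀) = f b₀ := by
    have := map_eq_zero_of_mem_span_image f hd (hL b₀).2
    rwa [map_sub, sub_eq_zero] at this
  have h2 : f (L b₀) = β * f p := by
    rw [map_smul, smul_eq_mul, mul_inv_cancel_left₀ (by linarith)]
  have h3 : f b₀ ≤ f p := hfmax (subset_faceCylinder hb₀)
  nlinarith

end SatisfiesAssumptionB

section Chains

variable {E ι : Type*} [NormedAddCommGroup E] [InnerProductSpace ℝ E] {n d : ι → E}
  {A : Set ι} {B : Set E} {δ : ℝ}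

def IsProjectionChain (n d : ι → E) (A : Set ι) (As : ℕ → Set ι) (Ls : ℕ → E →ₗ[ℝ] E)
    (u : ℕ → E) (K₀ K₁ : ℕ) : Prop :=
  ∀ k ∈ Ico K₀ K₁, As k ⊆ A ∧ IsObliqueProjection n d (As k) (Ls k) ∧ u (k + 1) = Ls k (u k)

namespace IsProjectionChain

variable {As : ℕ → Set ι} {Ls : ℕ → E →ₗ[ℝ] E} {u : ℕ → E} {K₀ K₁ : ℕ}

lemma mono (hc : IsProjectionChain n d A As Ls u K₀ K₁) {K₀' K₁' : ℕ} (h₀ : K₀ ≤ K₀')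
    (h₁ : K₁' ≤ K₁) : IsProjectionChain n d A As Ls u K₀' K₁' :=
  fun k hk => hc k ⟨h₀.trans hk.1, hk.2.trans_le h₁⟩

lemma smul (hc : IsProjectionChain n d A As Ls u K₀ K₁) (t : ℝ) :
    IsProjectionChain n d A As Ls (t • u) K₀ K₁ := fun k hk => by
  obtain ⟨hA, hL, hu⟩ := hc k hk
  exact ⟨hA, hL, by simp [hu]⟩

variable [FiniteDimensional ℝ E]

lemma mem_smul_faceCylinder (hc : IsProjectionChain n d A As Ls u K₀ K₁)
    (hB : SatisfiesAssumptionB B δ n d) (hn : ∀ i, ‖n i‖ ≤ 1) (hK : K₀ ≤ K₁) {t : ℝ}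
    (h : u K₀ ∈ t • faceCylinder B n A) : u K₁ ∈ t • faceCylinder B n A := by
  induction K₁, hK using Nat.le_induction with
  | base => exact h
  | succ k hk ih =>
    obtain ⟨hA, hL, hu⟩ := hc k ⟨hk, k.lt_succ_self⟩
    obtain ⟨w, hw, hwu⟩ := ih (hc.mono le_rfl k.le_succ)
    rw [hu, ← hwu, map_smul]
    exact smul_mem_smul_set (hB.mapsTo_faceCylinder hn hA hL hw)

lemma mem_faceCylinder (hc : IsProjectionChain n d A As Ls u K₀ K₁)
    (hB : SatisfiesAssumptionB B δ n d) (hn : ∀ i, ‖n i‖ ≤ 1) (hK : K₀ ≤ K₁)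
    (h : u K₀ ∈ faceCylinder B n A) : u K₁ ∈ faceCylinder B n A := by
  simpa using hc.mem_smul_faceCylinder hB hn hK (t := 1) (by simpa using h)

lemma map_d_eq_zero (hc : IsProjectionChain n d A As Ls u K₀ K₁)
    (hB : SatisfiesAssumptionB B δ n d) (hn : ∀ i, ‖n i‖ ≤ 1) {f : StrongDual ℝ E} {σ ε : ℝ}
    (hslab : ∀ p ∈ faceCylinder B n A, σ - ε ≤ f p → ∀ i ∈ A, ⟪p, n i⟫ = 0 → f (d i) = 0)
    (h₀ : u K₀ ∈ faceCylinder B n A) (h₁ : σ - ε ≤ f (u K₁)) :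
    ∀ k ∈ Ico K₀ K₁, ∀ i ∈ As k, f (d i) = 0 := by
  have step : ∀ k ∈ Ico K₀ K₁, σ - ε ≤ f (u (k + 1)) →
      (∀ i ∈ As k, f (d i) = 0) ∧ f (u k) = f (u (k + 1)) := by
    intro k hk hfk
    obtain ⟨hA, hL, hu⟩ := hc k hk
    have hC : u (k + 1) ∈ faceCylinder B n A :=
      (hc.mono le_rfl hk.2).mem_faceCylinder hB hn (hk.1.trans k.le_succ) h₀
    have hd : ∀ i ∈ As k, f (d i) = 0 := fun i hi =>
      hslab _ hC hfk i (hA hi) (hu ▸ (hL (u k)).1 i hi)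
    have := map_eq_zero_of_mem_span_image f hd (hL (u k)).2
    rw [map_sub, ← hu, sub_eq_zero] at this
    exact ⟨hd, this.symm⟩
  -- walking back from `u K₁`, `f` stays constant, hence in the slab `σ - ε ≤ f`
  have top : ∀ k ≤ K₁, K₀ ≤ k → σ - ε ≤ f (u k) := by
    intro k hk
    induction hk using Nat.decreasingInduction with
    | self => exact fun _ => h₁
    | of_succ k hk ih =>
      intro hk₀
      have h := ih (hk₀.trans k.le_succ)
      rwa [← (step k ⟨hk₀, hk⟩ h).2] at h
  exact fun k hk => (step k hk (top (k + 1) hk.2 (hk.1.trans k.le_succ))).1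

end IsProjectionChain

def IsChainContraction (B : Set E) (n d : ι → E) (A : Set ι) (β : ℝ) : Prop :=
  ∀ (As : ℕ → Set ι) (Ls : ℕ → E →ₗ[ℝ] E) (u : ℕ → E) (K₀ K₁ : ℕ), K₀ ≤ K₁ →
    IsProjectionChain n d A As Ls u K₀ K₁ → A ⊆ ⋃ k ∈ Ico K₀ K₁, As k →
    u K₀ ∈ faceCylinder B n A → u K₁ ∈ β • faceCylinder B n A

theorem SatisfiesAssumptionB.exists_pos_forall_map_lt_sub [FiniteDimensional ℝ E]
    (hB : SatisfiesAssumptionB B δ n d) (hn : ∀ i, ‖n i‖ ≤ 1)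
    (hA : faceSpace n A ⊔ Submodule.span ℝ (d '' A) = ⊤) {f : StrongDual ℝ E} (hf0 : f ≠ 0)
    {σ : ℝ} (hf : ∀ y ∈ faceCylinder B n A, f y ≤ σ) :
    ∃ ε > 0, ∀ (As : ℕ → Set ι) (Ls : ℕ → E →ₗ[ℝ] E) (u : ℕ → E) (K₀ K₁ : ℕ),
      IsProjectionChain n d A As Ls u K₀ K₁ → A ⊆ ⋃ k ∈ Ico K₀ K₁, As k →
      u K₀ ∈ faceCylinder B n A → f (u K₁) < σ - ε := by
  obtain ⟨ε, hε, hslab⟩ := hB.exists_pos_map_eq_zero_of_near_max_faceCylinder hn f hf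
  refine ⟨ε, hε, fun As Ls u K₀ K₁ hc hcov h₀ => lt_of_not_ge fun h₁ => hf0 ?_⟩
  have hd := hc.map_d_eq_zero hB hn hslab h₀ h₁
  have hker : faceSpace n A ⊔ Submodule.span ℝ (d '' A) ≤ LinearMap.ker (f : E →ₗ[ℝ] ℝ) := by
    refine sup_le (fun h hh => map_eq_zero_of_bddAbove_faceCylinder
      (interior_subset hB.zero_mem_interior) hf hh) (Submodule.span_le.2 ?_)
    rintro _ ⟨i, hi, rfl⟩
    obtain ⟨k, hk, hik⟩ := mem_iUnion₂.1 (hcov hi)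
    exact hd k hk i hik
  rw [hA, top_le_iff, LinearMap.ker_eq_top] at hker
  ext x
  simpa using LinearMap.congr_fun hker x

theorem SatisfiesAssumptionB.exists_isChainContraction [FiniteDimensional ℝ E]
    (hB : SatisfiesAssumptionB B δ n d) (hn : ∀ i, ‖n i‖ ≤ 1)
    (hA : faceSpace n A ⊔ Submodule.span ℝ (d '' A) = ⊤) :
    ∃ β, 0 < β ∧ β < 1 ∧ IsChainContraction B n d A β := by
  set C := faceCylinder B n A
  have hB0 : (0 : E) ∈ B := interior_subset hB.zero_mem_interior
  have hC0 : C ∈ 𝓝 0 := faceCylinder_mem_nhds (mem_interior_iff_mem_nhds.1 hB.zero_mem_interior)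
  have hCconv : Convex ℝ C := convex_faceCylinder hB.convex
  have hCcl : IsClosed C := isClosed_faceCylinder hB.isCompact
  set S := closure {b ∈ B | ∃ (As : ℕ → Set ι) (Ls : ℕ → E →ₗ[ℝ] E) (u : ℕ → E) (K₀ K₁ : ℕ),
    IsProjectionChain n d A As Ls u K₀ K₁ ∧ A ⊆ ⋃ k ∈ Ico K₀ K₁, As k ∧ u K₀ ∈ C ∧
      u K₁ - b ∈ faceSpace n A}
  have hSB : S ⊆ B := closure_minimal (sep_subset _ _) hB.isCompact.isClosed
  have hSint : S ⊆ interior C := by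
    intro b hbS
    by_contra hint
    obtain ⟨f, hfmax, hfb⟩ :=
      exists_isMaxOn_pos_of_notMem_interior hCconv (mem_interior_iff_mem_nhds.2 hC0) hint
    have hfC : ∀ y ∈ C, f y ≤ f b := fun y hy => hfmax hy
    obtain ⟨ε, hε, hgap⟩ :=
      hB.exists_pos_forall_map_lt_sub hn hA (by rintro rfl; simp at hfb) hfC
    obtain ⟨b', hfb', -, As, Ls, u, K₀, K₁, hc, hcov, h₀, hh⟩ := mem_closure_iff.1 hbS
      {x | f b - ε < f x} (isOpen_lt continuous_const f.continuous) (by simp [hε])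
    have hend : f (u K₁) = f b' := by
      have := map_eq_zero_of_bddAbove_faceCylinder hB0 hfC hh
      rwa [map_sub, sub_eq_zero] at this
    have hfb'' : f b - ε < f b' := hfb'
    linarith [hgap As Ls u K₀ K₁ hc hcov h₀]
  obtain ⟨β, hβ0, hβ1, hSβ⟩ := (hB.isCompact.of_isClosed_subset isClosed_closure hSB)
    |>.exists_subset_smul_of_subset_interior hCconv hCcl hC0 hSint
  refine ⟨β, hβ0, hβ1, fun As Ls u K₀ K₁ hK hc hcov h₀ => ?_⟩
  obtain ⟨b, hb, h, hh, hbh⟩ := hc.mem_faceCylinder hB hn hK h₀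
  rw [← hbh]
  refine add_mem_smul_faceCylinder hβ0.ne' (hSβ (subset_closure ⟨hb, As, Ls, u, K₀, K₁, hc, hcov,
    h₀, ?_⟩)) hh
  rwa [← hbh, add_sub_cancel_left]

lemma exists_le_subset_iUnion_Ico {As : ℕ → Set ι} (hA : A.Finite)
    (hcov : ∀ ℓ, A ⊆ ⋃ k, ⋃ (_ : ℓ ≤ k), As k)
    (K₀ : ℕ) : ∃ K₁, K₀ ≤ K₁ ∧ A ⊆ ⋃ k ∈ Ico K₀ K₁, As k := by
  have : ∀ᶠ K₁ in atTop, ∀ i ∈ A, ∃ k, ∃ (_ : k ∈ Ico K₀ K₁), i ∈ As k := by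
    refine hA.eventually_all.2 fun i hi => ?_
    obtain ⟨k, hk, hik⟩ := mem_iUnion₂.1 (hcov K₀ hi)
    exact (eventually_gt_atTop k).mono fun K₁ hK₁ => ⟨k, ⟨hk, hK₁⟩, hik⟩
  obtain ⟨K₁, hK₁, hcov₁⟩ := ((eventually_ge_atTop K₀).and this).exists
  exact ⟨K₁, hK₁, fun i hi => mem_iUnion₂.2 (hcov₁ i hi)⟩

namespace IsChainContraction

variable {β : ℝ} {As : ℕ → Set ι} {Ls : ℕ → E →ₗ[ℝ] E}

lemma mono (hβ : IsChainContraction B n d A β) (hB0 : (0 : E) ∈ B) (hB : Convex ℝ B)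
    (hβ0 : 0 < β) {β' : ℝ} (hββ' : β ≤ β') : IsChainContraction B n d A β' := by
  intro As Ls u K₀ K₁ hK hc hcov h₀
  obtain ⟨w, hw, hwu⟩ := hβ As Ls u K₀ K₁ hK hc hcov h₀
  have hβ' := hβ0.trans_le hββ'
  refine ⟨(β / β') • w, (convex_faceCylinder hB).smul_mem_of_zero_mem (subset_faceCylinder hB0) hw
    ⟨by positivity, div_le_one_of_le₀ hββ' hβ'.le⟩, ?_⟩
  rw [← hwu]
  exact (smul_smul _ _ _).trans (by rw [mul_div_cancel₀ _ hβ'.ne'])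

lemma mem_smul (hβ : IsChainContraction B n d A β) {u : ℕ → E} {K₀ K₁ : ℕ} (hK : K₀ ≤ K₁)
    (hc : IsProjectionChain n d A As Ls u K₀ K₁) (hcov : A ⊆ ⋃ k ∈ Ico K₀ K₁, As k) {t : ℝ}
    (ht : t ≠ 0) (h₀ : u K₀ ∈ t • faceCylinder B n A) : u K₁ ∈ (t * β) • faceCylinder B n A := by
  rw [mem_smul_set_iff_inv_smul_mem₀ ht] at h₀
  rw [mul_smul, mem_smul_set_iff_inv_smul_mem₀ ht]
  exact hβ As Ls (t⁻¹ • u) K₀ K₁ hK (hc.smul t⁻¹) hcov h₀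

theorem eventually_mem_pow_smul [FiniteDimensional ℝ E] (hβ : IsChainContraction B n d A β)
    (hβ0 : 0 < β) (hB : SatisfiesAssumptionB B δ n d) (hn : ∀ i, ‖n i‖ ≤ 1) (hA : A.Finite)
    (hAs : ∀ k, As k ⊆ A) (hLs : ∀ k, IsObliqueProjection n d (As k) (Ls k))
    (hcov : ∀ ℓ, A ⊆ ⋃ k, ⋃ (_ : ℓ ≤ k), As k) (j : ℕ) :
    ∀ᶠ K in atTop, ∀ u : ℕ → E, (∀ k, u (k + 1) = Ls k (u k)) →
      u 0 ∈ faceCylinder B n A → u K ∈ β ^ j • faceCylinder B n A := by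
  have hc : ∀ u : ℕ → E, (∀ k, u (k + 1) = Ls k (u k)) →
      ∀ K₀ K₁, IsProjectionChain n d A As Ls u K₀ K₁ :=
    fun u hu _ _ k _ => ⟨hAs k, hLs k, hu k⟩
  induction j with
  | zero =>
    exact Eventually.of_forall fun K u hu h₀ => by
      simpa using (hc u hu 0 K).mem_faceCylinder hB hn K.zero_le h₀
  | succ j ih =>
    obtain ⟨K₀, hK₀⟩ := eventually_atTop.1 ih
    obtain ⟨K₁, hK₀₁, hcov₁⟩ := exists_le_subset_iUnion_Ico hA hcov K₀
    refine eventually_atTop.2 ⟨K₁, fun K hK u hu h₀ => ?_⟩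
    have h₁ := hβ.mem_smul hK₀₁ (hc u hu K₀ K₁) hcov₁ (pow_pos hβ0 j).ne' (hK₀ K₀ le_rfl u hu h₀)
    rw [pow_succ]
    exact (hc u hu K₁ K).mem_smul_faceCylinder hB hn hK h₁

end IsChainContraction

theorem SatisfiesAssumptionB.exists_uniform_isChainContraction [Finite ι] [FiniteDimensional ℝ E]
    (hB : SatisfiesAssumptionB B δ n d) (hn : ∀ i, ‖n i‖ ≤ 1) :
    ∃ β, 0 < β ∧ β < 1 ∧ ∀ A : Set ι,
      faceSpace n A ⊔ Submodule.span ℝ (d '' A) = ⊤ → IsChainContraction B n d A β := by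
  have : ∀ A : Set ι, ∃ β, 0 < β ∧ β < 1 ∧
      (faceSpace n A ⊔ Submodule.span ℝ (d '' A) = ⊤ → IsChainContraction B n d A β) := by
    intro A
    by_cases hA : faceSpace n A ⊔ Submodule.span ℝ (d '' A) = ⊤
    · obtain ⟨β, h0, h1, h⟩ := hB.exists_isChainContraction hn hA
      exact ⟨β, h0, h1, fun _ => h⟩
    · exact ⟨1 / 2, by norm_num, by norm_num, fun h => absurd h hA⟩
  choose β hβ0 hβ1 hβ using this
  obtain ⟨A₀, hA₀⟩ := Finite.exists_max β
  exact ⟨β A₀, hβ0 A₀, hβ1 A₀, fun A hA =>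
    (hβ A hA).mono (interior_subset hB.zero_mem_interior) hB.convex (hβ0 A) (hA₀ A)⟩

end Chains

section DualGauge

variable {J : ℕ} {B : Set (EucSp J)}

lemma dualSet_mem_nhds (hB : Bornology.IsBounded B) : dualSet B ∈ 𝓝 0 := by
  obtain ⟨R, hR, hBR⟩ := hB.subset_closedBall_lt 0 0
  refine mem_of_superset (Metric.ball_mem_nhds 0 (inv_pos.2 hR)) fun y hy z hz => ?_
  have hy' : ‖y‖ < R⁻¹ := by simpa using hy
  have hz' : ‖z‖ ≤ R := by simpa using hBR hz
  calc ⟪y, z⟫ ≤ ‖y‖ * ‖z‖ := real_inner_le_norm _ _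
    _ ≤ R⁻¹ * R := mul_le_mul hy'.le hz' (norm_nonneg _) (inv_nonneg.2 hR.le)
    _ = 1 := inv_mul_cancel₀ hR.ne'

lemma inner_le_gauge_dualSet (hB : Bornology.IsBounded B) {z : EucSp J} (hz : z ∈ B)
    (y : EucSp J) : ⟪y, z⟫ ≤ gauge (dualSet B) y := by
  refine le_of_forall_gt fun a ha => ?_
  obtain ⟨b, hb, hba, y', hy', rfl⟩ :=
    exists_lt_of_gauge_lt (absorbent_nhds_zero (dualSet_mem_nhds hB)) ha
  calc ⟪b • y', z⟫ = b * ⟪y', z⟫ := real_inner_smul_left _ _ _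
    _ ≤ b * 1 := mul_le_mul_of_nonneg_left (hy' z hz) hb.le
    _ < a := by rwa [mul_one]

lemma gauge_dualSet_le {y : EucSp J} {M : ℝ} (hM : 0 ≤ M) (h : ∀ z ∈ B, ⟪y, z⟫ ≤ M) :
    gauge (dualSet B) y ≤ M := by
  refine le_of_forall_pos_le_add fun ε hε => gauge_le_of_mem (by positivity) ?_
  have hMε : 0 < M + ε := by positivity
  rw [mem_smul_set_iff_inv_smul_mem₀ hMε.ne']
  intro z hz
  rw [real_inner_smul_left, inv_mul_le_one₀ hMε]
  linarith [h z hz]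

lemma exists_pos_mul_norm_le_gauge_dualSet (hB : Bornology.IsBounded B) (hB0 : B ∈ 𝓝 0) :
    ∃ ρ > 0, ∀ v, ρ * ‖v‖ ≤ gauge (dualSet B) v := by
  obtain ⟨ρ, hρ, hball⟩ := Metric.mem_nhds_iff.1 hB0
  refine ⟨ρ / 2, half_pos hρ, fun v => ?_⟩
  rcases eq_or_ne v 0 with rfl | hv
  · simp
  have hv0 : 0 < ‖v‖ := norm_pos_iff.2 hv
  have hz : ((ρ / 2) * ‖v‖⁻¹) • v ∈ B := hball <| by
    rw [mem_ball_zero_iff, norm_smul, Real.norm_of_nonneg (by positivity),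
      inv_mul_cancel_right₀ hv0.ne']
    exact half_lt_self hρ
  have := inner_le_gauge_dualSet hB hz v
  rwa [real_inner_smul_right, real_inner_self_eq_norm_sq, mul_assoc, sq,
    inv_mul_cancel_left₀ hv0.ne'] at this

variable {ι : Type*} {n : ι → EucSp J} {A : Set ι}

lemma inner_le_mul_gauge_dualSet (hB : Bornology.IsBounded B) {y w : EucSp J}
    (hy : y ∈ (faceSpace n A)ᗮ) {t : ℝ} (ht : 0 ≤ t) (hw : w ∈ t • faceCylinder B n A) :
    ⟪y, w⟫ ≤ t * gauge (dualSet B) y := by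
  obtain ⟨_, ⟨b, hb, h, hh, rfl⟩, rfl⟩ := hw
  rw [real_inner_smul_right, inner_add_right, Submodule.inner_left_of_mem_orthogonal hh hy,
    add_zero]
  exact mul_le_mul_of_nonneg_left (inner_le_gauge_dualSet hB hb y) ht

lemma inner_frontComp_adjoint (Ls : ℕ → EucSp J →ₗ[ℝ] EucSp J) (K : ℕ) (y z : EucSp J) :
    ⟪frontComp (fun k w => LinearMap.adjoint (Ls k) w) K y, z⟫ =
      ⟪y, backComp (fun k w => Ls k w) K z⟫ := by
  induction K generalizing y with
  | zero => rfl
  | succ K ih => rw [frontComp, ih, LinearMap.adjoint_inner_left]; rfl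

lemma gauge_dualSet_frontComp_le (hB : Bornology.IsBounded B) {y : EucSp J}
    (hy : y ∈ (faceSpace n A)ᗮ) {t : ℝ} (ht : 0 ≤ t) (Ls : ℕ → EucSp J →ₗ[ℝ] EucSp J) (K : ℕ)
    (h : ∀ z ∈ B, backComp (fun k w => Ls k w) K z ∈ t • faceCylinder B n A) :
    gauge (dualSet B) (frontComp (fun k w => LinearMap.adjoint (Ls k) w) K y) ≤
      t * gauge (dualSet B) y :=
  gauge_dualSet_le (mul_nonneg ht (gauge_nonneg _)) fun z hz => by
    rw [inner_frontComp_adjoint]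
    exact inner_le_mul_gauge_dualSet hB hy ht (h z hz)

theorem IsChainContraction.tendsto_frontComp_adjoint {d : ι → EucSp J} {δ β : ℝ}
    (hβ : IsChainContraction B n d A β) (hβ0 : 0 < β) (hβ1 : β < 1)
    (hB : SatisfiesAssumptionB B δ n d) (hn : ∀ i, ‖n i‖ ≤ 1) (hA : A.Finite)
    {As : ℕ → Set ι} {Ls : ℕ → EucSp J →ₗ[ℝ] EucSp J} (hAs : ∀ k, As k ⊆ A)
    (hLs : ∀ k, IsObliqueProjection n d (As k) (Ls k))
    (hcov : ∀ ℓ, A ⊆ ⋃ k, ⋃ (_ : ℓ ≤ k), As k) {y : EucSp J} (hy : y ∈ (faceSpace n A)ᗮ) :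
    Tendsto (fun K => frontComp (fun k w => LinearMap.adjoint (Ls k) w) K y) atTop (𝓝 0) := by
  set P := fun K => frontComp (fun k w => LinearMap.adjoint (Ls k) w) K y
  have hbound : ∀ j, ∀ᶠ K in atTop, gauge (dualSet B) (P K) ≤ β ^ j * gauge (dualSet B) y :=
    fun j => (hβ.eventually_mem_pow_smul hβ0 hB hn hA hAs hLs hcov j).mono fun K hK =>
      gauge_dualSet_frontComp_le hB.isCompact.isBounded hy (pow_nonneg hβ0.le j) Ls K
        fun z hz => hK (fun k => backComp (fun k w => Ls k w) k z) (fun _ => rfl)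
          (subset_faceCylinder hz)
  have hg : Tendsto (fun K => gauge (dualSet B) (P K)) atTop (𝓝 0) := by
    refine tendsto_order.2 ⟨fun a ha => Eventually.of_forall fun K =>
      ha.trans_le (gauge_nonneg _), fun a ha => ?_⟩
    have hpow := (tendsto_pow_atTop_nhds_zero_of_lt_one hβ0.le hβ1).mul_const
      (gauge (dualSet B) y)
    obtain ⟨j, hj⟩ := (hpow.eventually (gt_mem_nhds (by simpa using ha))).exists
    exact (hbound j).mono fun K hK => hK.trans_lt hj
  obtain ⟨ρ, hρ, hρv⟩ := exists_pos_mul_norm_le_gauge_dualSet hB.isCompact.isBounded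
    (mem_interior_iff_mem_nhds.1 hB.zero_mem_interior)
  exact squeeze_zero_norm (fun K => (le_div_iff₀' hρ).2 (hρv (P K)))
    (by simpa using hg.div_const ρ)

end DualGauge

section SkorokhodData

variable {J N : ℕ} {n d : Fin N → EucSp J} {c : Fin N → ℝ}

lemma span_Hset (x : EucSp J) :
    Submodule.span ℝ (Hset n c x) = faceSpace n (ISet n c x) :=
  Submodule.span_eq (faceSpace n (ISet n c x))

lemma span_coneGen (s : Set (EucSp J)) :
    Submodule.span ℝ (coneGen s) = Submodule.span ℝ s := by
  refine le_antisymm (Submodule.span_le.2 ?_) (Submodule.span_mono fun v hv =>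
    ⟨1, fun _ => 1, fun _ => v, fun _ => zero_le_one, fun _ => hv, by simp⟩)
  rintro _ ⟨k, r, v, -, hv, rfl⟩
  exact Submodule.sum_mem _ fun i _ => Submodule.smul_mem _ _ (Submodule.subset_span (hv i))

lemma isObliqueProjection_iff {x : EucSp J} {L : EucSp J →ₗ[ℝ] EucSp J} :
    IsObliqueProjection n d (ISet n c x) L ↔
      ∀ y, L y ∈ Hset n c x ∧ L y - y ∈ Submodule.span ℝ (dCone n c d x) := by
  rw [dCone, span_coneGen]
  rfl

lemma faceSpace_sup_span_eq_top (hdn : ∀ i, ⟪d i, n i⟫ = 1) {x : EucSp J}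
    (hx : x ∈ frontier (Gset n c)) (hW : x ∉ Wstar n c d) :
    faceSpace n (ISet n c x) ⊔ Submodule.span ℝ (d '' ISet n c x) = ⊤ := by
  by_cases h2 : 2 ≤ (ISet n c x).ncard
  · by_contra hne
    refine hW ⟨⟨hx, h2⟩, ?_⟩
    rwa [Submodule.span_union, span_Hset, dCone, span_coneGen]
  · rcases (ncard_le_one_iff_eq (toFinite (ISet n c x))).1 (by omega) with h | ⟨i, h⟩
    · rw [h, faceSpace_empty, top_sup_eq]
    · rw [h]
      exact faceSpace_singleton_sup_span (by rw [hdn]; exact one_ne_zero)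

end SkorokhodData

/-- Here `xs k` and `Ls k` stand for `x_{k+1}` and `L_{x_{k+1}}`. -/
theorem statement16_general (J N : ℕ)
    (n d : Fin N → EucSp J) (c : Fin N → ℝ)
    (hn : ∀ i, ‖n i‖ = 1) (hdn : ∀ i, ⟪d i, n i⟫ = 1)
    (δ : ℝ) (hδ : 0 < δ) (B : Set (EucSp J))
    (hBcompact : IsCompact B) (hBconvex : Convex ℝ B)
    (hB0 : (0 : EucSp J) ∈ interior B)
    (hBgeom : ∀ i : Fin N, ∀ z ∈ frontier B, |⟪z, n i⟫| < δ →
      ∀ ν : EucSp J, ‖ν‖ = 1 → (∀ y ∈ B, 0 ≤ ⟪ν, y - z⟫) → ⟪ν, d i⟫ = 0) :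
    ∃ δ' : ℝ, 0 ≤ δ' ∧ δ' < 1 ∧
      (∀ x ∈ frontier (Gset n c), x ∉ Wstar n c d →
        ∀ (K : ℕ) (xs : ℕ → EucSp J),
          (∀ k < K, xs k ∈ frontier (Gset n c) ∧ xs k ∉ Wstar n c d) →
          ISet n c x = ⋃ (k : ℕ) (_ : k < K), ISet n c (xs k) →
          ∀ Ls : ℕ → (EucSp J →ₗ[ℝ] EucSp J),
            (∀ k < K, ∀ y : EucSp J, Ls k y ∈ Hset n c (xs k) ∧
              Ls k y - y ∈ Submodule.span ℝ (dCone n c d (xs k))) →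
            ∀ y ∈ (Submodule.span ℝ (Hset n c x))ᗮ,
              gauge (dualSet B)
                  (frontComp (fun k z => LinearMap.adjoint (Ls k) z) K y) ≤
                δ' * gauge (dualSet B) y) ∧
      (∀ x ∈ frontier (Gset n c), x ∉ Wstar n c d →
        ∀ xs : ℕ → EucSp J,
          (∀ k, xs k ∈ frontier (Gset n c) ∧ xs k ∉ Wstar n c d) →
          (∀ ℓ : ℕ, ISet n c x = ⋃ (k : ℕ) (_ : ℓ ≤ k), ISet n c (xs k)) →
          ∀ Ls : ℕ → (EucSp J →ₗ[ℝ] EucSp J),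
            (∀ k, ∀ y : EucSp J, Ls k y ∈ Hset n c (xs k) ∧
              Ls k y - y ∈ Submodule.span ℝ (dCone n c d (xs k))) →
            ∀ y ∈ (Submodule.span ℝ (Hset n c x))ᗮ,
              Tendsto (fun K => frontComp (fun k z => LinearMap.adjoint (Ls k) z) K y)
                atTop (𝓝 0)) := by
  have hB : SatisfiesAssumptionB B δ n d := .of_unit_normals hBcompact hBconvex hB0 hδ hBgeom
  have hn' : ∀ i, ‖n i‖ ≤ 1 := fun i => (hn i).le
  obtain ⟨β, hβ0, hβ1, hβ⟩ := hB.exists_uniform_isChainContraction hn'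
  refine ⟨β, hβ0.le, hβ1, ?_, ?_⟩
  · intro x hx hW K xs _ hcov Ls hLs y hy
    rw [span_Hset] at hy
    refine gauge_dualSet_frontComp_le hBcompact.isBounded hy hβ0.le Ls K fun z hz => ?_
    refine hβ _ (faceSpace_sup_span_eq_top hdn hx hW) (fun k => ISet n c (xs k)) Ls
      (fun k => backComp (fun k w => Ls k w) k z) 0 K K.zero_le
      (fun k hk => ⟨?_, isObliqueProjection_iff.2 (hLs k hk.2), rfl⟩) ?_ (subset_faceCylinder hz)
    · exact hcov ▸ subset_iUnion₂ (s := fun k (_ : k < K) => ISet n c (xs k)) k hk.2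
    · exact hcov.le.trans (iUnion₂_mono' fun k hk => ⟨k, ⟨k.zero_le, hk⟩, subset_rfl⟩)
  · intro x hx hW xs _ hcov Ls hLs y hy
    rw [span_Hset] at hy
    exact (hβ _ (faceSpace_sup_span_eq_top hdn hx hW)).tendsto_frontComp_adjoint hβ0 hβ1 hB hn'
      (toFinite _) (fun k => hcov 0 ▸ subset_iUnion₂ (s := fun k (_ : 0 ≤ k) => ISet n c (xs k))
        k k.zero_le) (fun k => isObliqueProjection_iff.2 (hLs k)) (fun ℓ => (hcov ℓ).le) hy

/-- **Lemma (uniform contraction for products of adjoint projection operators).**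
Fix `δ > 0` and a set `B` as in Assumption (B).  There is `δ' ∈ [0,1)` such that for every
`x ∈ ∂G \ W*` and finite sequence `x₁,…,x_K ∈ ∂G \ W*` covering `I(x)`, the product
`L_{x₁}* ⋯ L_{x_K}*` contracts the `B*`-gauge by `δ'` on `H_x^⊥`; consequently, for infinite
sequences covering `I(x)` along every tail, `L_{x₁}* ⋯ L_{x_K}* y → 0` on `H_x^⊥`.
(`xs k`, `Ls k` correspond to `x_{k+1}`, `L_{x_{k+1}}`.) -/
theorem statement16 (J N : ℕ) (hJ : 1 ≤ J) (hN : 1 ≤ N)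
    (n d : Fin N → EucSp J) (c : Fin N → ℝ)
    (hn : ∀ i, ‖n i‖ = 1) (hdn : ∀ i, ⟪d i, n i⟫ = 1)
    (hGne : (Gset n c).Nonempty)
    (δ : ℝ) (hδ : 0 < δ) (B : Set (EucSp J))
    (hBcompact : IsCompact B) (hBconvex : Convex ℝ B) (hBsymm : ∀ z ∈ B, -z ∈ B)
    (hB0 : (0 : EucSp J) ∈ interior B)
    (hBgeom : ∀ i : Fin N, ∀ z ∈ frontier B, |⟪z, n i⟫| < δ →
      ∀ ν : EucSp J, ‖ν‖ = 1 → (∀ y ∈ B, 0 ≤ ⟪ν, y - z⟫) → ⟪ν, d i⟫ = 0) :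
    ∃ δ' : ℝ, 0 ≤ δ' ∧ δ' < 1 ∧
      (∀ x ∈ frontier (Gset n c), x ∉ Wstar n c d →
        ∀ (K : ℕ) (xs : ℕ → EucSp J),
          (∀ k < K, xs k ∈ frontier (Gset n c) ∧ xs k ∉ Wstar n c d) →
          ISet n c x = ⋃ (k : ℕ) (_ : k < K), ISet n c (xs k) →
          ∀ Ls : ℕ → (EucSp J →ₗ[ℝ] EucSp J),
            (∀ k < K, ∀ y : EucSp J, Ls k y ∈ Hset n c (xs k) ∧
              Ls k y - y ∈ Submodule.span ℝ (dCone n c d (xs k))) →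
            ∀ y ∈ (Submodule.span ℝ (Hset n c x))ᗮ,
              gauge (dualSet B)
                  (frontComp (fun k z => LinearMap.adjoint (Ls k) z) K y) ≤
                δ' * gauge (dualSet B) y) ∧
      (∀ x ∈ frontier (Gset n c), x ∉ Wstar n c d →
        ∀ xs : ℕ → EucSp J,
          (∀ k, xs k ∈ frontier (Gset n c) ∧ xs k ∉ Wstar n c d) →
          (∀ ℓ : ℕ, ISet n c x = ⋃ (k : ℕ) (_ : ℓ ≤ k), ISet n c (xs k)) →
          ∀ Ls : ℕ → (EucSp J →ₗ[ℝ] EucSp J),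
            (∀ k, ∀ y : EucSp J, Ls k y ∈ Hset n c (xs k) ∧
              Ls k y - y ∈ Submodule.span ℝ (dCone n c d (xs k))) →
            ∀ y ∈ (Submodule.span ℝ (Hset n c x))ᗮ,
              Tendsto (fun K => frontComp (fun k z => LinearMap.adjoint (Ls k) z) K y)
                atTop (𝓝 0)) :=
  statement16_general J N n d c hn hdn δ hδ B hBcompact hBconvex hB0 hBgeom
end
end
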